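/- arXiv:1710.05156 — 4 statements merged into one kernel-verified Lean document; each statement's English description precedes it below -/
import Mathlib

section
/- For an integer m ≥ 3 and even p = 2q with 0 ≤ 2q ≤ m, define λ(p) = 2 / ∏_{r=0}^{q-1} 4·sin²(π(2r+1)/(2m)); for odd p = 2q+1 with 2q+1 ≤ m, define λ(p) = m / ∏_{r=1}^{q} 4·sin²(πr/m). Then, with n = m − p, λ(m − n) = 2^n · ∏_{j=1}^{n} cos(π(j − (n+1)/2)/m). -/
open Real Finset Polynomial

private lemma key_fac (θ : ℝ) : 1 - Complex.exp (θ * Complex.I)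
    = (2 * Real.sin (θ/2) : ℝ) * Complex.exp (((θ - π)/2 : ℝ) * Complex.I) := by
  rw [Complex.exp_mul_I, Complex.exp_mul_I, ← Complex.ofReal_cos, ← Complex.ofReal_sin,
    ← Complex.ofReal_cos, ← Complex.ofReal_sin]
  have h1 : Real.cos ((θ - π)/2) = Real.sin (θ/2) := by
    rw [show (θ - π)/2 = θ/2 - π/2 by ring, Real.cos_sub_pi_div_two]
  have h2 : Real.sin ((θ - π)/2) = -Real.cos (θ/2) := by
    rw [show (θ - π)/2 = θ/2 - π/2 by ring, Real.sin_sub_pi_div_two]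
  have h3 : Real.cos θ = 1 - 2 * Real.sin (θ/2) ^ 2 := by
    have h := Real.cos_two_mul' (θ/2)
    rw [show 2*(θ/2) = θ by ring] at h
    nlinarith [Real.sin_sq_add_cos_sq (θ/2)]
  have h4 : Real.sin θ = 2 * Real.sin (θ/2) * Real.cos (θ/2) := by
    have h := Real.sin_two_mul (θ/2)
    rw [show 2*(θ/2) = θ by ring] at h
    linarith
  rw [h1, h2, h3, h4]
  push_cast
  ring

private lemma sumId (m : ℕ) : ∑ k ∈ range m, (k : ℝ) = m * (m - 1) / 2 := by
  induction m with
  | zero => simp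
  | succ n ih => rw [Finset.sum_range_succ, ih]; push_cast; ring

private lemma prodB (m : ℕ) (hm : 0 < m) :
    ∏ k ∈ range m, (2 * Real.sin (π * (2 * k + 1) / (2 * m))) = 2 := by
  have hm0 : (m : ℂ) ≠ 0 := Nat.cast_ne_zero.mpr hm.ne'
  have hmr : (m : ℝ) ≠ 0 := Nat.cast_ne_zero.mpr hm.ne'
  have hζ := Complex.isPrimitiveRoot_exp m hm.ne'
  have hα : (Complex.exp ((π : ℝ) * Complex.I / m)) ^ m = (-1 : ℂ) := by
    rw [← Complex.exp_nat_mul, show (m : ℂ) * ((π:ℝ) * Complex.I / m) = (π:ℝ) * Complex.I by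
      field_simp, Complex.exp_pi_mul_I]
  have hpoly := X_pow_sub_C_eq_prod hζ hm hα
  have hev := congrArg (Polynomial.eval (1 : ℂ)) hpoly
  simp only [eval_sub, eval_pow, eval_X, eval_C, one_pow, eval_prod, eval_sub, eval_one,
    sub_neg_eq_add] at hev
  have hform : ∀ i ∈ range m, (1 : ℂ) - Complex.exp (2*(π:ℂ)*Complex.I/m) ^ i
      * Complex.exp ((π : ℝ) * Complex.I / m)
      = ((2 * Real.sin (π * (2*i+1) / (2*m)) : ℝ)) *
        Complex.exp (((π * (2*i+1)/m - π)/2 : ℝ) * Complex.I) := by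
    intro i _
    rw [← Complex.exp_nat_mul, ← Complex.exp_add,
      show (i : ℂ) * (2*(π:ℂ)*Complex.I/m) + (π : ℝ) * Complex.I / m
        = ((π * (2*i+1)/m : ℝ) : ℂ) * Complex.I by push_cast; ring]
    have h := key_fac (π * (2*i+1)/m)
    rw [show π * (2*(i:ℝ)+1)/(m:ℝ)/2 = π * (2*(i:ℝ)+1)/(2*(m:ℝ)) by ring] at h
    exact h
  rw [Finset.prod_congr rfl hform, Finset.prod_mul_distrib, ← Complex.ofReal_prod,
    ← Complex.exp_sum] at hev
  have hsum : ∑ i ∈ range m, ((π * (2*(i:ℝ)+1)/m - π)/2 : ℝ) = 0 := by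
    have h1 : ∀ i ∈ range m, ((π * (2*(i:ℝ)+1)/m - π)/2 : ℝ)
        = (π/m) * (i:ℝ) + (π/(2*m) - π/2) := by intro i _; ring
    rw [Finset.sum_congr rfl h1, Finset.sum_add_distrib, ← Finset.mul_sum, sumId,
      Finset.sum_const, Finset.card_range]
    rw [nsmul_eq_mul]
    field_simp
    ring
  have hsum' : ∑ i ∈ range m, (((π * (2*(i:ℝ)+1)/m - π)/2 : ℝ) : ℂ) * Complex.I = 0 := by
    rw [← Finset.sum_mul, ← Complex.ofReal_sum, hsum]; simp
  rw [hsum', Complex.exp_zero, mul_one] at hev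
  norm_num at hev
  apply Complex.ofReal_injective
  push_cast
  linear_combination hev.symm

private lemma prodA (m : ℕ) (hm : 0 < m) :
    ∏ k ∈ Finset.Ico 1 m, (2 * Real.sin (π * k / m)) = m := by
  have hmr : (m : ℝ) ≠ 0 := Nat.cast_ne_zero.mpr hm.ne'
  have hζ := Complex.isPrimitiveRoot_exp m hm.ne'
  have hpoly := X_pow_sub_C_eq_prod hζ hm (one_pow m)
  have hsplit : (X : ℂ[X]) ^ m - C 1 =
      (X - C (Complex.exp (2*(π:ℂ)*Complex.I/m) ^ 0 * 1)) *
      ∏ i ∈ Finset.Ico 1 m, (X - C (Complex.exp (2*(π:ℂ)*Complex.I/m) ^ i * 1)) := by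
    rw [hpoly, Finset.range_eq_Ico, Finset.prod_eq_prod_Ico_succ_bot hm]
  rw [pow_zero, one_mul, map_one] at hsplit
  have hgeom : ((X : ℂ[X]) - 1) * (∑ i ∈ range m, X ^ i)
      = (X - 1) * ∏ i ∈ Finset.Ico 1 m, (X - C (Complex.exp (2*(π:ℂ)*Complex.I/m) ^ i * 1)) := by
    rw [mul_comm ((X:ℂ[X]) - 1), geom_sum_mul, ← hsplit]
  have hne : (X : ℂ[X]) - 1 ≠ 0 := by
    have := Polynomial.X_sub_C_ne_zero (1 : ℂ); simpa using this
  have hcancel := mul_left_cancel₀ hne hgeom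
  have hev := congrArg (Polynomial.eval (1 : ℂ)) hcancel
  simp only [eval_geom_sum, one_pow, eval_prod, eval_sub, eval_X, eval_C, one_mul,
    Finset.sum_const, Finset.card_range, nsmul_eq_mul, mul_one] at hev
  have hform : ∀ i ∈ Finset.Ico 1 m, (1 : ℂ) - Complex.exp (2*(π:ℂ)*Complex.I/m) ^ i
      = ((2 * Real.sin (π * i / m) : ℝ)) *
        Complex.exp (((2*π*i/m - π)/2 : ℝ) * Complex.I) := by
    intro i _
    rw [← Complex.exp_nat_mul,
      show (i : ℂ) * (2*(π:ℂ)*Complex.I/m) = ((2*π*i/m : ℝ) : ℂ) * Complex.I by push_cast; ring]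
    have h := key_fac (2*π*i/m)
    rw [show 2*π*(i:ℝ)/(m:ℝ)/2 = π * (i:ℝ) / (m:ℝ) by ring] at h
    exact h
  rw [Finset.prod_congr rfl hform, Finset.prod_mul_distrib, ← Complex.ofReal_prod,
    ← Complex.exp_sum] at hev
  have hsum : ∑ i ∈ Finset.Ico 1 m, ((2*π*(i:ℝ)/m - π)/2 : ℝ) = 0 := by
    have h1 : ∀ i ∈ Finset.Ico 1 m, ((2*π*(i:ℝ)/m - π)/2 : ℝ)
        = (π/m) * (i:ℝ) + (- π/2) := by intro i _; ring
    have h2 : ∑ i ∈ Finset.Ico 1 m, (i:ℝ) = ∑ i ∈ range m, (i:ℝ) := by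
      rw [Finset.range_eq_Ico, Finset.sum_eq_sum_Ico_succ_bot hm]; simp
    rw [Finset.sum_congr rfl h1, Finset.sum_add_distrib, ← Finset.mul_sum, h2, sumId,
      Finset.sum_const, Nat.card_Ico, nsmul_eq_mul]
    have h3 : ((m - 1 : ℕ) : ℝ) = (m : ℝ) - 1 := by
      have h4 : 1 ≤ m := hm; push_cast [h4]; ring
    rw [h3]
    field_simp
    ring
  have hsum' : ∑ i ∈ Finset.Ico 1 m, (((2*π*(i:ℝ)/m - π)/2 : ℝ) : ℂ) * Complex.I = 0 := by
    rw [← Finset.sum_mul, ← Complex.ofReal_sum, hsum]; simp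
  rw [hsum', Complex.exp_zero, mul_one] at hev
  exact_mod_cast hev.symm

/-- For `m ≥ 3` and `p ≤ m`, the largest eigenvalue `λ(p)` of sector `p`
(given by `2 / ∏_{r=0}^{q-1} 4 sin²(π(2r+1)/(2m))` for `p = 2q` even, and by
`m / ∏_{r=1}^{q} 4 sin²(πr/m)` for `p = 2q+1` odd) equals
`2^n ∏_{j=1}^{n} cos(π(j - (n+1)/2)/m)` with `n = m - p`. -/
theorem lambda_max_eq_cos_product (m p : ℕ) (hm : 3 ≤ m) (hpm : p ≤ m) :
    (∀ q : ℕ, p = 2 * q →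
      2 / ∏ r ∈ Finset.range q, (4 * Real.sin (Real.pi * (2 * r + 1) / (2 * m)) ^ 2)
        = 2 ^ (m - p) *
            ∏ j ∈ Finset.Icc 1 (m - p), Real.cos (Real.pi * ((j : ℝ) - ((m - p : ℕ) + 1) / 2) / m)) ∧
    (∀ q : ℕ, p = 2 * q + 1 →
      (m : ℝ) / ∏ r ∈ Finset.Icc 1 q, (4 * Real.sin (Real.pi * r / m) ^ 2)
        = 2 ^ (m - p) *
            ∏ j ∈ Finset.Icc 1 (m - p), Real.cos (Real.pi * ((j : ℝ) - ((m - p : ℕ) + 1) / 2) / m)) := by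
  have hm0 : 0 < m := by omega
  have hmr : (m : ℝ) ≠ 0 := Nat.cast_ne_zero.mpr hm0.ne'
  have hmr' : (0:ℝ) < m := by positivity
  constructor
  · -- even case
    rintro q rfl
    have hq2 : 2 * q ≤ m := hpm
    set f : ℕ → ℝ := fun k => 2 * Real.sin (π * (2 * k + 1) / (2 * m)) with hf
    have hcard : (Finset.Icc 1 (m - 2*q)).card = m - 2*q := by simp
    have hbij : ∏ j ∈ Finset.Icc 1 (m - 2*q),
        (2 * Real.cos (π * ((j : ℝ) - ((m - 2*q : ℕ) + 1) / 2) / m))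
        = ∏ k ∈ Finset.Ico q (m - q), f k := by
      refine Finset.prod_nbij' (fun j => m - q - j) (fun k => m - q - k) ?_ ?_ ?_ ?_ ?_
      · intro a ha; simp only [Finset.mem_Icc, Finset.mem_Ico] at *; omega
      · intro a ha; simp only [Finset.mem_Icc, Finset.mem_Ico] at *; omega
      · intro a ha; simp only [Finset.mem_Icc] at ha; omega
      · intro a ha; simp only [Finset.mem_Ico] at ha; omega
      · intro a ha
        simp only [Finset.mem_Icc] at ha
        rw [hf]; dsimp only
        have hc1 : ((m - q - a : ℕ) : ℝ) = (m:ℝ) - q - a := by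
          have h : q + a ≤ m := by omega
          rw [Nat.sub_sub, Nat.cast_sub h]; push_cast; ring
        have hc2 : ((m - 2*q : ℕ) : ℝ) = (m:ℝ) - 2*q := by
          rw [Nat.cast_sub hq2]; push_cast; ring
        rw [← Real.sin_pi_div_two_sub]
        congr 2
        rw [hc1, hc2]
        field_simp
        ring
    have hR : (2:ℝ) ^ (m - 2*q) *
        ∏ j ∈ Finset.Icc 1 (m - 2*q), Real.cos (π * ((j : ℝ) - ((m - 2*q : ℕ) + 1) / 2) / m)
        = ∏ k ∈ Finset.Ico q (m - q), f k := by
      rw [← hbij, Finset.prod_mul_distrib, Finset.prod_const, hcard]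
    have hA : (0:ℝ) < ∏ r ∈ range q, (4 * Real.sin (π * (2 * r + 1) / (2 * m)) ^ 2) := by
      apply Finset.prod_pos
      intro r hr
      simp only [Finset.mem_range] at hr
      have h2r : (2*(r:ℝ)+1) < 2*m := by
        have h : 2*r+1 < 2*m := by omega
        exact_mod_cast h
      have hs : 0 < Real.sin (π * (2 * r + 1) / (2 * m)) := by
        apply Real.sin_pos_of_pos_of_lt_pi
        · positivity
        · rw [div_lt_iff₀ (by positivity)]
          nlinarith [Real.pi_pos]
      nlinarith
    have hmir : ∏ r ∈ range q, f r = ∏ k ∈ Finset.Ico (m - q) m, f k := by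
      refine Finset.prod_nbij' (fun r => m - 1 - r) (fun k => m - 1 - k) ?_ ?_ ?_ ?_ ?_
      · intro a ha; simp only [Finset.mem_range, Finset.mem_Ico] at *; omega
      · intro a ha; simp only [Finset.mem_range, Finset.mem_Ico] at *; omega
      · intro a ha; simp only [Finset.mem_range] at ha; omega
      · intro a ha; simp only [Finset.mem_Ico] at ha; omega
      · intro a ha
        simp only [Finset.mem_range] at ha
        rw [hf]; dsimp only
        have hc1 : ((m - 1 - a : ℕ) : ℝ) = (m:ℝ) - 1 - a := by
          have h : 1 + a ≤ m := by omega
          rw [Nat.sub_sub, Nat.cast_sub h]; push_cast; ring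
        rw [show π * (2*((m - 1 - a : ℕ):ℝ)+1)/(2*m) = π - π * (2*(a:ℝ)+1)/(2*m) by
          rw [hc1]; field_simp; ring, Real.sin_pi_sub]
    have hL : (∏ r ∈ range q, (4 * Real.sin (π * (2 * r + 1) / (2 * m)) ^ 2)) *
        ∏ k ∈ Finset.Ico q (m - q), f k = 2 := by
      have h44 : ∀ r ∈ range q, 4 * Real.sin (π * (2 * r + 1) / (2 * m)) ^ 2 = f r * f r := by
        intro r _; rw [hf]; ring
      rw [Finset.prod_congr rfl h44, Finset.prod_mul_distrib]
      nth_rewrite 2 [hmir]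
      rw [mul_assoc, mul_comm (∏ k ∈ Finset.Ico (m-q) m, f k),
        Finset.prod_Ico_consecutive f (by omega : q ≤ m - q) (by omega : m - q ≤ m),
        Finset.range_eq_Ico,
        Finset.prod_Ico_consecutive f (by omega : 0 ≤ q) (by omega : q ≤ m),
        ← Finset.range_eq_Ico]
      exact prodB m hm0
    rw [hR, div_eq_iff hA.ne', mul_comm]
    exact hL.symm
  · -- odd case
    rintro q rfl
    have hq2 : 2 * q + 1 ≤ m := hpm
    set g : ℕ → ℝ := fun k => 2 * Real.sin (π * k / m) with hg
    have hcard : (Finset.Icc 1 (m - (2*q+1))).card = m - (2*q+1) := by simp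
    have hbij : ∏ j ∈ Finset.Icc 1 (m - (2*q+1)),
        (2 * Real.cos (π * ((j : ℝ) - ((m - (2*q+1) : ℕ) + 1) / 2) / m))
        = ∏ k ∈ Finset.Ico (q+1) (m - q), g k := by
      refine Finset.prod_nbij' (fun j => m - q - j) (fun k => m - q - k) ?_ ?_ ?_ ?_ ?_
      · intro a ha; simp only [Finset.mem_Icc, Finset.mem_Ico] at *; omega
      · intro a ha; simp only [Finset.mem_Icc, Finset.mem_Ico] at *; omega
      · intro a ha; simp only [Finset.mem_Icc] at ha; omega
      · intro a ha; simp only [Finset.mem_Ico] at ha; omega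
      · intro a ha
        simp only [Finset.mem_Icc] at ha
        rw [hg]; dsimp only
        have hc1 : ((m - q - a : ℕ) : ℝ) = (m:ℝ) - q - a := by
          have h : q + a ≤ m := by omega
          rw [Nat.sub_sub, Nat.cast_sub h]; push_cast; ring
        have hc2 : ((m - (2*q+1) : ℕ) : ℝ) = (m:ℝ) - (2*q+1) := by
          rw [Nat.cast_sub hq2]; push_cast; ring
        rw [← Real.sin_pi_div_two_sub]
        congr 2
        rw [hc1, hc2]
        field_simp
        ring
    have hR : (2:ℝ) ^ (m - (2*q+1)) *
        ∏ j ∈ Finset.Icc 1 (m - (2*q+1)),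
          Real.cos (π * ((j : ℝ) - ((m - (2*q+1) : ℕ) + 1) / 2) / m)
        = ∏ k ∈ Finset.Ico (q+1) (m - q), g k := by
      rw [← hbij, Finset.prod_mul_distrib, Finset.prod_const, hcard]
    have hA : (0:ℝ) < ∏ r ∈ Finset.Icc 1 q, (4 * Real.sin (π * r / m) ^ 2) := by
      apply Finset.prod_pos
      intro r hr
      simp only [Finset.mem_Icc] at hr
      have h1r : (0:ℝ) < r := by exact_mod_cast hr.1
      have h2r : (r:ℝ) < m := by
        have h : r < m := by omega
        exact_mod_cast h
      have hs : 0 < Real.sin (π * r / m) := by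
        apply Real.sin_pos_of_pos_of_lt_pi
        · positivity
        · rw [div_lt_iff₀ (by positivity)]
          nlinarith [Real.pi_pos]
      nlinarith
    have hmir : ∏ r ∈ Finset.Ico 1 (q+1), g r = ∏ k ∈ Finset.Ico (m - q) m, g k := by
      refine Finset.prod_nbij' (fun r => m - r) (fun k => m - k) ?_ ?_ ?_ ?_ ?_
      · intro a ha; simp only [Finset.mem_Ico] at *; omega
      · intro a ha; simp only [Finset.mem_Ico] at *; omega
      · intro a ha; simp only [Finset.mem_Ico] at ha; omega
      · intro a ha; simp only [Finset.mem_Ico] at ha; omega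
      · intro a ha
        simp only [Finset.mem_Ico] at ha
        rw [hg]; dsimp only
        have h : a ≤ m := by omega
        rw [show π * ((m - a : ℕ):ℝ)/m = π - π * (a:ℝ)/m by
          rw [Nat.cast_sub h]; field_simp, Real.sin_pi_sub]
    have hL : (∏ r ∈ Finset.Icc 1 q, (4 * Real.sin (π * r / m) ^ 2)) *
        ∏ k ∈ Finset.Ico (q+1) (m - q), g k = m := by
      have h44 : ∀ r ∈ Finset.Icc 1 q, 4 * Real.sin (π * r / m) ^ 2 = g r * g r := by
        intro r _; rw [hg]; ring
      rw [Finset.prod_congr rfl h44, Finset.prod_mul_distrib,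
        show Finset.Icc 1 q = Finset.Ico 1 (q+1) by rfl]
      nth_rewrite 2 [hmir]
      rw [mul_assoc, mul_comm (∏ k ∈ Finset.Ico (m-q) m, g k),
        Finset.prod_Ico_consecutive g (by omega : q + 1 ≤ m - q) (by omega : m - q ≤ m),
        Finset.prod_Ico_consecutive g (by omega : 1 ≤ q + 1) (by omega : q + 1 ≤ m)]
      exact prodA m hm0
    rw [hR, div_eq_iff hA.ne', mul_comm]
    exact hL.symm
end

section
/- For an integer m ≥ 3, the even integer n maximizing f(n) = ∏_{j=1}^{n/2} (2·cos(π(2j−1)/(2m)))² over even n with 0 ≤ n ≤ m is n₀ = 2·⌊(m+1)/3⌋. -/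
/-!
The factor `(2 cos θⱼ)²`, `θⱼ = π(2j-1)/(2m)`, exceeds `1` when `θⱼ < π/3`, i.e. when
`3j ≤ m + 1`, and lies strictly between `0` and `1` when `m + 2 ≤ 3j` and `2j ≤ m`
(then `π/3 < θⱼ < π/2`). So the partial products strictly increase up to `k₀ = ⌊(m+1)/3⌋`
factors and strictly decrease after it, and `n₀ = 2k₀` is the unique maximizer.
-/

open Real Finset

section PartialProducts

variable {R : Type*} [CommSemiring R] [PartialOrder R] [IsStrictOrderedRing R] {f : ℕ → R}
  {k l : ℕ}

theorem prod_Ioc_lt_prod_Ioc_of_one_lt (hkl : k < l) (hpos : ∀ j ∈ Ioc 0 k, 0 < f j)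
    (hgt : ∀ j ∈ Ioc k l, 1 < f j) : ∏ j ∈ Ioc 0 k, f j < ∏ j ∈ Ioc 0 l, f j := by
  rw [← prod_Ioc_consecutive f k.zero_le hkl.le]
  refine lt_mul_of_one_lt_right (prod_pos hpos) ?_
  calc (1 : R) = ∏ _j ∈ Ioc k l, 1 := prod_const_one.symm
    _ < ∏ j ∈ Ioc k l, f j :=
      prod_lt_prod_of_nonempty (fun _ _ ↦ one_pos) hgt ⟨l, by simp [hkl]⟩

theorem prod_Ioc_lt_prod_Ioc_of_lt_one (hkl : k < l) (hpos : ∀ j ∈ Ioc 0 l, 0 < f j)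
    (hlt : ∀ j ∈ Ioc k l, f j < 1) : ∏ j ∈ Ioc 0 l, f j < ∏ j ∈ Ioc 0 k, f j := by
  rw [← prod_Ioc_consecutive f k.zero_le hkl.le]
  have hsub : Ioc k l ⊆ Ioc 0 l := Ioc_subset_Ioc_left k.zero_le
  refine mul_lt_of_lt_one_right (prod_pos fun j hj ↦ hpos j (Ioc_subset_Ioc_right hkl.le hj)) ?_
  calc ∏ j ∈ Ioc k l, f j < ∏ _j ∈ Ioc k l, 1 :=
        prod_lt_prod_of_nonempty (fun j hj ↦ hpos j (hsub hj)) hlt ⟨l, by simp [hkl]⟩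
    _ = 1 := prod_const_one

theorem prod_Ioc_lt_prod_Ioc_of_unimodal {k₀ K : ℕ} (hkK : k ≤ K) (hk : k ≠ k₀)
    (hgt : ∀ j ∈ Ioc 0 k₀, 1 < f j) (hmem : ∀ j ∈ Ioc k₀ K, f j ∈ Set.Ioo 0 1) :
    ∏ j ∈ Ioc 0 k, f j < ∏ j ∈ Ioc 0 k₀, f j := by
  rcases hk.lt_or_gt with hlt | hgt'
  · refine prod_Ioc_lt_prod_Ioc_of_one_lt hlt (fun j hj ↦ ?_) fun j hj ↦ hgt j ?_
    · exact one_pos.trans (hgt j (Ioc_subset_Ioc_right hlt.le hj))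
    · exact Ioc_subset_Ioc_left k.zero_le hj
  · refine prod_Ioc_lt_prod_Ioc_of_lt_one hgt' (fun j hj ↦ ?_) fun j hj ↦ ?_
    · rcases le_or_gt j k₀ with hj₀ | hj₀
      · exact one_pos.trans (hgt j (mem_Ioc.2 ⟨(mem_Ioc.1 hj).1, hj₀⟩))
      · exact (hmem j (mem_Ioc.2 ⟨hj₀, (mem_Ioc.1 hj).2.trans hkK⟩)).1
    · exact (hmem j (Ioc_subset_Ioc_right hkK hj)).2

end PartialProducts

theorem one_lt_sq_two_mul_cos {x : ℝ} (hx : |x| < π / 3) : 1 < (2 * cos x) ^ 2 := by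
  have h : cos (π / 3) < cos |x| :=
    cos_lt_cos_of_nonneg_of_le_pi (abs_nonneg x) (by linarith [pi_pos]) hx
  rw [cos_abs, cos_pi_div_three] at h
  nlinarith

theorem sq_two_mul_cos_lt_one {x : ℝ} (h₁ : π / 3 < x) (h₂ : x < 2 * π / 3) :
    (2 * cos x) ^ 2 < 1 := by
  have hlt : cos x < cos (π / 3) :=
    cos_lt_cos_of_nonneg_of_le_pi (by linarith [pi_pos]) (by linarith [pi_pos]) h₁
  have hgt : cos (π - π / 3) < cos x :=
    cos_lt_cos_of_nonneg_of_le_pi (by linarith [pi_pos]) (by linarith [pi_pos]) (by linarith)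
  rw [cos_pi_sub, cos_pi_div_three] at hgt
  rw [cos_pi_div_three] at hlt
  nlinarith

/-- For `j = 1, …, m`, the numbers `cos (chebyshevNodeAngle m j)` are the roots of the Chebyshev
polynomial `Tₘ`. -/
noncomputable def chebyshevNodeAngle (m j : ℝ) : ℝ := π * (2 * j - 1) / (2 * m)

section ChebyshevNodeAngle

variable {m j : ℝ}

theorem chebyshevNodeAngle_lt_pi_mul_iff (hm : 0 < m) {c : ℝ} :
    chebyshevNodeAngle m j < π * c ↔ 2 * j - 1 < 2 * m * c := by
  rw [chebyshevNodeAngle, div_lt_iff₀ (by positivity), mul_assoc, mul_lt_mul_iff_right₀ pi_pos,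
    mul_comm c]

theorem pi_mul_lt_chebyshevNodeAngle_iff (hm : 0 < m) {c : ℝ} :
    π * c < chebyshevNodeAngle m j ↔ 2 * m * c < 2 * j - 1 := by
  rw [chebyshevNodeAngle, lt_div_iff₀ (by positivity), mul_assoc, mul_lt_mul_iff_right₀ pi_pos,
    mul_comm c]

end ChebyshevNodeAngle

section NatIndices

variable {m j : ℕ}

theorem one_lt_sq_two_mul_cos_chebyshevNodeAngle (hj : 1 ≤ j) (hjm : 3 * j ≤ m + 1) :
    1 < (2 * cos (chebyshevNodeAngle m j)) ^ 2 := by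
  have hj' : (1 : ℝ) ≤ j := by exact_mod_cast hj
  have hjm' : 3 * (j : ℝ) ≤ m + 1 := by exact_mod_cast hjm
  have hm : (0 : ℝ) < m := by linarith
  have hlow := (pi_mul_lt_chebyshevNodeAngle_iff hm (j := j) (c := 0)).2 (by linarith)
  have hup := (chebyshevNodeAngle_lt_pi_mul_iff hm (j := j) (c := 1 / 3)).2 (by linarith)
  exact one_lt_sq_two_mul_cos (abs_lt.2 ⟨by linarith [pi_pos], by linarith⟩)

theorem sq_two_mul_cos_chebyshevNodeAngle_mem_Ioo (hjm : m + 2 ≤ 3 * j) (hj : 2 * j ≤ m) :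
    (2 * cos (chebyshevNodeAngle m j)) ^ 2 ∈ Set.Ioo 0 1 := by
  have hjm' : (m : ℝ) + 2 ≤ 3 * j := by exact_mod_cast hjm
  have hj' : 2 * (j : ℝ) ≤ m := by exact_mod_cast hj
  have hm : (0 : ℝ) < m := by linarith
  have hlow := (pi_mul_lt_chebyshevNodeAngle_iff hm (j := j) (c := 1 / 3)).2 (by linarith)
  have hup := (chebyshevNodeAngle_lt_pi_mul_iff hm (j := j) (c := 1 / 2)).2 (by linarith)
  have hcos : 0 < cos (chebyshevNodeAngle m j) :=
    cos_pos_of_mem_Ioo ⟨by linarith [pi_pos], by linarith⟩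
  exact ⟨by positivity, sq_two_mul_cos_lt_one (by linarith) (by linarith [pi_pos])⟩

end NatIndices

theorem maximizing_even_n_general (m : ℕ) :
    let f : ℕ → ℝ := fun n =>
      ∏ j ∈ Finset.Icc 1 (n / 2), (2 * Real.cos (Real.pi * (2 * (j : ℝ) - 1) / (2 * m))) ^ 2
    let n₀ : ℕ := 2 * ((m + 1) / 3)
    Even n₀ ∧ n₀ ≤ m ∧
      (∀ n : ℕ, Even n → n ≤ m → f n ≤ f n₀) ∧
      (∀ n : ℕ, Even n → n ≤ m → n ≠ n₀ → f n < f n₀) := by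
  intro f n₀
  have hf : ∀ k, f (2 * k) = ∏ j ∈ Ioc 0 k, (2 * cos (chebyshevNodeAngle m j)) ^ 2 := fun k ↦ by
    simp only [f, Nat.mul_div_cancel_left k two_pos, ← Icc_add_one_left_eq_Ioc, zero_add]
    rfl
  have hmax : ∀ n : ℕ, Even n → n ≤ m → n ≠ n₀ → f n < f n₀ := by
    rintro n ⟨k, rfl⟩ hkm hk
    rw [← two_mul, hf, hf]
    exact prod_Ioc_lt_prod_Ioc_of_unimodal (K := m / 2) (by omega) (by omega)
      (fun j hj ↦ one_lt_sq_two_mul_cos_chebyshevNodeAngle (mem_Ioc.1 hj).1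
        (by have := (mem_Ioc.1 hj).2; omega))
      (fun j hj ↦ sq_two_mul_cos_chebyshevNodeAngle_mem_Ioo
        (by have := (mem_Ioc.1 hj).1; omega) (by have := (mem_Ioc.1 hj).2; omega))
  refine ⟨even_two_mul _, by omega, fun n hn hnm ↦ ?_, hmax⟩
  rcases eq_or_ne n n₀ with rfl | hne
  · exact le_rfl
  · exact (hmax n hn hnm hne).le

/-- For `m ≥ 3`, the even integer `n` in `[0, m]` maximizing
`f(n) = ∏_{j=1}^{n/2} (2 cos(π(2j-1)/(2m)))²` is `n₀ = 2⌊(m+1)/3⌋`. -/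
theorem maximizing_even_n (m : ℕ) (hm : 3 ≤ m) :
    let f : ℕ → ℝ := fun n =>
      ∏ j ∈ Finset.Icc 1 (n / 2), (2 * Real.cos (Real.pi * (2 * (j : ℝ) - 1) / (2 * m))) ^ 2
    let n₀ : ℕ := 2 * ((m + 1) / 3)
    Even n₀ ∧ n₀ ≤ m ∧
      (∀ n : ℕ, Even n → n ≤ m → f n ≤ f n₀) ∧
      (∀ n : ℕ, Even n → n ≤ m → n ≠ n₀ → f n < f n₀) :=
  maximizing_even_n_general m
end

section
/- Define h(m) = (1/(2m)) · log(∏_{j=1}^{⌊(m+1)/3⌋} (2·cos(π(2j−1)/(2m)))²) = (1/m)·∑_{j=1}^{⌊(m+1)/3⌋} log(2·cos(π(2j−1)/(2m))). Then lim_{m→∞} h(m) = −(3/(2π))·∫_0^{π/3} log(2 sin t) dt, the entropy of the hexagonal lattice dimer model. -/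
open Filter Finset Real MeasureTheory intervalIntegral Set

noncomputable section EntropyAux

private def LL : ℝ → ℝ := fun t => Real.log (2 * Real.sin t)

private lemma sin_lb {t : ℝ} (h0 : 0 < t) (h1 : t ≤ π / 2) : t ≤ 2 * Real.sin t := by
  have h := Real.mul_le_sin h0.le h1
  have hpi := Real.pi_pos
  rw [div_mul_eq_mul_div, div_le_iff₀ hpi] at h
  have hs : 0 ≤ Real.sin t := le_trans (by positivity) (Real.mul_le_sin h0.le h1)
  nlinarith [Real.pi_le_four]

private lemma neg_log_le {x : ℝ} (hx : 0 < x) : -Real.log x ≤ 2 * x ^ (-(1:ℝ)/2) := by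
  have h1 : Real.log (x ^ (-(1:ℝ)/2)) = (-(1:ℝ)/2) * Real.log x := Real.log_rpow hx _
  have h2 : Real.log (x ^ (-(1:ℝ)/2)) ≤ x ^ (-(1:ℝ)/2) := by
    have := Real.log_le_sub_one_of_pos (Real.rpow_pos_of_pos hx (-(1:ℝ)/2))
    linarith
  nlinarith [Real.rpow_pos_of_pos hx (-(1:ℝ)/2)]

private lemma II_LL : IntervalIntegrable LL volume 0 (π/2) := by
  have hg : IntervalIntegrable (fun x : ℝ => 2 * x ^ (-(1:ℝ)/2) + 1) volume 0 (π/2) :=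
    ((intervalIntegrable_rpow' (by norm_num)).const_mul 2).add intervalIntegrable_const
  apply hg.mono_fun'
  · exact ((Real.measurable_log.comp
      (measurable_const.mul Real.continuous_sin.measurable)).aestronglyMeasurable)
  · rw [Set.uIoc_of_le (by positivity : (0:ℝ) ≤ π/2)]
    refine MeasureTheory.ae_restrict_of_forall_mem measurableSet_Ioc ?_
    intro x hx
    have hx0 : 0 < x := hx.1
    have hle : x ≤ 2 * Real.sin x := sin_lb hx0 hx.2
    have hs2 : 2 * Real.sin x ≤ 2 := by nlinarith [Real.sin_le_one x]
    have hrp : (0:ℝ) < x ^ (-(1:ℝ)/2) := Real.rpow_pos_of_pos hx0 _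
    have hub : Real.log (2 * Real.sin x) ≤ 1 := by
      have := Real.log_le_sub_one_of_pos (lt_of_lt_of_le hx0 hle)
      linarith
    have hlb : Real.log x ≤ Real.log (2 * Real.sin x) :=
      Real.log_le_log hx0 hle
    have := neg_log_le hx0
    simp only [LL, Real.norm_eq_abs]
    rw [abs_le]
    constructor <;> nlinarith

private lemma II_LL' {a b : ℝ} (ha : a ∈ Icc (0:ℝ) (π/2)) (hb : b ∈ Icc (0:ℝ) (π/2)) :
    IntervalIntegrable LL volume a b :=
  II_LL.mono_set (Set.uIcc_subset_uIcc (by simpa [Set.uIcc_of_le (by positivity : (0:ℝ) ≤ π/2)] using ha)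
    (by simpa [Set.uIcc_of_le (by positivity : (0:ℝ) ≤ π/2)] using hb))

private lemma II_CC {c : ℝ} (h0 : 0 ≤ c) (h1 : c < π/2) :
    IntervalIntegrable (fun t => Real.log (2 * Real.cos t)) volume 0 c := by
  apply ContinuousOn.intervalIntegrable
  apply ContinuousOn.log
  · exact (continuous_const.mul Real.continuous_cos).continuousOn
  · intro t ht
    rw [Set.uIcc_of_le h0] at ht
    have : 0 < Real.cos t := Real.cos_pos_of_mem_Ioo
      ⟨lt_of_lt_of_le (neg_lt_zero.mpr (by positivity)) ht.1, lt_of_le_of_lt ht.2 h1⟩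
    positivity

private lemma refl_eq (c : ℝ) :
    (∫ t in (0:ℝ)..c, Real.log (2 * Real.cos t)) = ∫ t in (π/2 - c)..(π/2), LL t := by
  have h1 : (∫ t in (0:ℝ)..c, Real.log (2 * Real.cos t)) = ∫ t in (0:ℝ)..c, LL (π/2 - t) := by
    refine intervalIntegral.integral_congr fun t _ => ?_
    simp [LL, Real.sin_pi_div_two_sub]
  rw [h1, intervalIntegral.integral_comp_sub_left LL (π/2), sub_zero]

private lemma dup_eq {c : ℝ} (h0 : 0 < c) (h1 : c ≤ π/4) :
    (∫ t in (0:ℝ)..(2*c), LL t) =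
      2 * ((∫ t in (0:ℝ)..c, LL t) + ∫ t in (π/2 - c)..(π/2), LL t) := by
  have hc2 : 2 * c ≤ π/2 := by linarith
  have hstep : (∫ x in (0:ℝ)..c, LL (2 * x)) = (2:ℝ)⁻¹ • ∫ x in (0:ℝ)..(2*c), LL x := by
    have := intervalIntegral.integral_comp_mul_left LL (a := 0) (b := c) (two_ne_zero)
    simpa using this
  have hcongr : (∫ x in (0:ℝ)..c, LL (2 * x))
      = ∫ x in (0:ℝ)..c, (LL x + Real.log (2 * Real.cos x)) := by
    refine intervalIntegral.integral_congr_ae (MeasureTheory.ae_of_all _ fun x hx => ?_)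
    rw [Set.uIoc_of_le h0.le] at hx
    have hx0 : 0 < x := hx.1
    have hxpi : x < π/2 := lt_of_le_of_lt hx.2 (by linarith)
    have hs : 0 < Real.sin x := Real.sin_pos_of_pos_of_lt_pi hx0 (by nlinarith [Real.pi_pos])
    have hco : 0 < Real.cos x := Real.cos_pos_of_mem_Ioo ⟨by linarith, hxpi⟩
    have : (2 : ℝ) * Real.sin (2 * x) = (2 * Real.sin x) * (2 * Real.cos x) := by
      rw [Real.sin_two_mul]; ring
    rw [LL, LL, this, Real.log_mul (by positivity) (by positivity)]
  have hadd : (∫ x in (0:ℝ)..c, (LL x + Real.log (2 * Real.cos x)))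
      = (∫ x in (0:ℝ)..c, LL x) + ∫ x in (0:ℝ)..c, Real.log (2 * Real.cos x) :=
    intervalIntegral.integral_add
      (II_LL' (by constructor <;> [rfl; positivity] ) ⟨h0.le, by linarith⟩)
      (II_CC h0.le (by linarith))
  have := hstep.symm.trans (hcongr.trans hadd)
  rw [refl_eq c] at this
  rw [smul_eq_mul] at this
  linarith

private lemma K_zero : (∫ t in (0:ℝ)..(π/2), LL t) = 0 := by
  have hq : 0 < π/4 := by positivity
  have h := dup_eq hq (le_refl (π/4))
  rw [show 2 * (π/4) = π/2 by ring, show π/2 - π/4 = π/4 by ring] at h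
  have hadd : (∫ t in (0:ℝ)..(π/4), LL t) + (∫ t in (π/4)..(π/2), LL t)
      = ∫ t in (0:ℝ)..(π/2), LL t :=
    intervalIntegral.integral_add_adjacent_intervals
      (II_LL' ⟨le_refl 0, by positivity⟩ ⟨by positivity, by linarith [Real.pi_pos]⟩)
      (II_LL' ⟨by positivity, by linarith [Real.pi_pos]⟩ ⟨by positivity, le_refl _⟩)
  linarith

private lemma B_eq :
    (∫ t in (0:ℝ)..(π/3), Real.log (2 * Real.cos t))
      = -(3/2) * ∫ t in (0:ℝ)..(π/3), LL t := by
  have h6 : (0:ℝ) < π/6 := by positivity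
  have hA := dup_eq h6 (by linarith [Real.pi_pos])
  rw [show 2 * (π/6) = π/3 by ring, show π/2 - π/6 = π/3 by ring] at hA
  have hB := refl_eq (π/3)
  rw [show π/2 - π/3 = π/6 by ring] at hB
  have hpi := Real.pi_pos
  have hadd1 : (∫ t in (0:ℝ)..(π/6), LL t) + (∫ t in (π/6)..(π/3), LL t)
      = ∫ t in (0:ℝ)..(π/3), LL t :=
    intervalIntegral.integral_add_adjacent_intervals
      (II_LL' ⟨le_refl 0, by positivity⟩ ⟨by positivity, by linarith⟩)
      (II_LL' ⟨by positivity, by linarith⟩ ⟨by positivity, by linarith⟩)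
  have hadd2 : (∫ t in (π/6)..(π/3), LL t) + (∫ t in (π/3)..(π/2), LL t)
      = ∫ t in (π/6)..(π/2), LL t :=
    intervalIntegral.integral_add_adjacent_intervals
      (II_LL' ⟨by positivity, by linarith⟩ ⟨by positivity, by linarith⟩)
      (II_LL' ⟨by positivity, by linarith⟩ ⟨by positivity, le_refl _⟩)
  have hadd3 : (∫ t in (0:ℝ)..(π/6), LL t) + (∫ t in (π/6)..(π/2), LL t)
      = ∫ t in (0:ℝ)..(π/2), LL t :=
    intervalIntegral.integral_add_adjacent_intervals
      (II_LL' ⟨le_refl 0, by positivity⟩ ⟨by positivity, by linarith⟩)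
      (II_LL' ⟨by positivity, by linarith⟩ ⟨by positivity, le_refl _⟩)
  have hK := K_zero
  linarith

private def gg : ℝ → ℝ := fun t => Real.log (2 * Real.cos (min |t| (7 * π / 16)))

private lemma c16 : 7 * π / 16 < π / 2 := by nlinarith [Real.pi_pos]

private lemma gg_cos_pos (t : ℝ) : 0 < Real.cos (min |t| (7 * π / 16)) := by
  apply Real.cos_pos_of_mem_Ioo
  constructor
  · have : (0:ℝ) ≤ min |t| (7 * π / 16) := le_min (abs_nonneg t) (by positivity)
    nlinarith [Real.pi_pos]
  · exact lt_of_le_of_lt (min_le_right _ _) c16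

private lemma gg_cont : Continuous gg := by
  rw [continuous_iff_continuousAt]
  intro x
  have hpos := gg_cos_pos x
  exact (Real.continuousAt_log (by positivity)).comp
    ((continuous_const.mul (Real.continuous_cos.comp
      (continuous_abs.min continuous_const))).continuousAt)

private lemma gg_key {u v : ℝ} (h : |u| ≤ v) : gg v ≤ gg u := by
  have hv : |v| = v := abs_of_nonneg (le_trans (abs_nonneg u) h)
  have hmin : min |u| (7 * π / 16) ≤ min |v| (7 * π / 16) := by
    rw [hv]; exact min_le_min h le_rfl
  have hcos : Real.cos (min |v| (7 * π / 16)) ≤ Real.cos (min |u| (7 * π / 16)) := by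
    apply Real.cos_le_cos_of_nonneg_of_le_pi
    · exact le_min (abs_nonneg u) (by positivity)
    · have := lt_of_le_of_lt (min_le_right |v| _) c16
      nlinarith [Real.pi_pos]
    · exact hmin
  exact Real.log_le_log (by have := gg_cos_pos v; positivity) (by linarith)

private lemma gg_int (a b : ℝ) : IntervalIntegrable gg volume a b :=
  gg_cont.intervalIntegrable a b

private def FF : ℝ → ℝ := fun x => ∫ t in (0:ℝ)..x, gg t

private lemma FF_cont : Continuous FF :=
  intervalIntegral.continuous_primitive (fun a b => gg_int a b) 0

private lemma FF_int (p q : ℝ) : (∫ t in p..q, gg t) = FF q - FF p := by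
  have := intervalIntegral.integral_add_adjacent_intervals (gg_int 0 p) (gg_int p q)
  simp only [FF]
  linarith

/-- per-interval bound, upper direction -/
private lemma step_le {p q : ℝ} (hp : 0 ≤ p) (hpq : p ≤ q) :
    FF q - FF p ≤ (q - p) * gg p := by
  rw [← FF_int]
  have h : (∫ t in p..q, gg t) ≤ ∫ t in p..q, gg p :=
    intervalIntegral.integral_mono_on hpq (gg_int p q) intervalIntegrable_const
      (fun u hu => gg_key (by rw [abs_of_nonneg hp]; exact hu.1))
  simpa using h

/-- per-interval bound, lower direction -/
private lemma step_ge {r p : ℝ} (hr : -p ≤ r) (hrp : r ≤ p) :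
    (p - r) * gg p ≤ FF p - FF r := by
  rw [← FF_int]
  have h : (∫ t in r..p, gg p) ≤ ∫ t in r..p, gg t :=
    intervalIntegral.integral_mono_on hrp intervalIntegrable_const (gg_int r p)
      (fun u hu => gg_key (abs_le.mpr ⟨by linarith [hu.1], hu.2⟩))
  simpa using h

private def xx (m j : ℕ) : ℝ := π * (2 * (j:ℝ) - 1) / (2 * m)
private def ee (m k : ℕ) : ℝ := π * (2 * (k:ℝ) + 1) / (2 * m)

private lemma xx_succ (m N : ℕ) : xx m (N+1) = ee m N := by
  simp only [xx, ee]; push_cast; ring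

private lemma sandwich (m : ℕ) (hm : 1 ≤ m) (N : ℕ) :
    FF (ee m N) - FF (ee m 0) ≤ (∑ j ∈ Icc 1 N, (π / m) * gg (xx m j)) ∧
      (∑ j ∈ Icc 1 N, (π / m) * gg (xx m j)) ≤ FF (xx m N) - FF (xx m 0) := by
  have hm0 : (0:ℝ) < m := by exact_mod_cast hm
  have hpi := Real.pi_pos
  induction N with
  | zero => simp
  | succ N ih =>
    rw [Finset.sum_Icc_succ_top (Nat.succ_le_succ (Nat.zero_le N))]
    have hx : xx m (N+1) = ee m N := xx_succ m N
    have heN : (0:ℝ) ≤ ee m N := by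
      have : (0:ℝ) ≤ 2 * (N:ℝ) + 1 := by positivity
      simp only [ee]; positivity
    have hdiff : ee m (N+1) - ee m N = π / m := by
      simp only [ee]; push_cast; field_simp; ring
    have hxdiff : ee m N - xx m N = π / m := by
      simp only [ee, xx]; field_simp; ring
    have hneg : -(ee m N) ≤ xx m N := by
      simp only [ee, xx]
      rw [← neg_div, div_le_div_iff₀ (by positivity) (by positivity)]
      have hN : (0:ℝ) ≤ (N:ℝ) := Nat.cast_nonneg N
      nlinarith [mul_nonneg (mul_nonneg hpi.le hN) hm0.le]
    have hle : xx m N ≤ ee m N := by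
      rw [← sub_nonneg, hxdiff]; positivity
    constructor
    · have h1 := step_le heN (by linarith [hdiff] : ee m N ≤ ee m (N+1))
      rw [hdiff] at h1
      rw [hx]
      linarith [ih.1]
    · have h2 := step_ge hneg hle
      rw [hxdiff] at h2
      rw [hx]
      linarith [ih.2]
private lemma gg_eq {m j : ℕ} (hm : 1 ≤ m) (hj : 0 < j) (hj2 : 3 * j ≤ m + 1) :
    gg (xx m j) = Real.log (2 * Real.cos (xx m j)) := by
  have hm0 : (0:ℝ) < m := by exact_mod_cast hm
  have hj1 : (1:ℝ) ≤ (j:ℝ) := by exact_mod_cast hj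
  have hj2R : 3 * (j:ℝ) ≤ (m:ℝ) + 1 := by exact_mod_cast hj2
  have hpi := Real.pi_pos
  have hx0 : 0 ≤ xx m j := by
    simp only [xx]
    apply div_nonneg _ (by positivity)
    nlinarith
  have hx1 : xx m j ≤ 7 * π / 16 := by
    simp only [xx]
    rw [div_le_iff₀ (by positivity)]
    have h1 : π * (3 * (j:ℝ)) ≤ π * ((m:ℝ) + 1) :=
      mul_le_mul_of_nonneg_left hj2R hpi.le
    have h2 : (0:ℝ) ≤ π * (m:ℝ) := by positivity
    nlinarith
  simp only [gg]
  rw [abs_of_nonneg hx0, min_eq_left hx1]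

private lemma FF_pi3 : FF (π/3) - FF 0 = ∫ t in (0:ℝ)..(π/3), Real.log (2 * Real.cos t) := by
  have hpi := Real.pi_pos
  have h0 : FF 0 = 0 := intervalIntegral.integral_same
  have h1 : FF (π/3) = ∫ t in (0:ℝ)..(π/3), Real.log (2 * Real.cos t) := by
    apply intervalIntegral.integral_congr
    intro t ht
    rw [Set.uIcc_of_le (by positivity : (0:ℝ) ≤ π/3)] at ht
    simp only [gg]
    rw [abs_of_nonneg ht.1, min_eq_left (by nlinarith [ht.2])]
  rw [h0, h1, sub_zero]

private lemma hNdiv : Tendsto (fun m : ℕ => (((m+1)/3 : ℕ) : ℝ) / m) atTop (nhds (1/3)) := by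
  have h1m : Tendsto (fun n : ℕ => 1 / (n : ℝ)) atTop (nhds 0) := tendsto_one_div_atTop_nhds_zero_nat
  apply tendsto_of_tendsto_of_tendsto_of_le_of_le'
    (g := fun m : ℕ => 1/3 - 1/(m:ℝ)) (h := fun m : ℕ => 1/3 + 1/(m:ℝ))
  · simpa using tendsto_const_nhds.sub h1m
  · simpa using tendsto_const_nhds.add h1m
  · filter_upwards [eventually_ge_atTop 1] with m hm
    have hm0 : (0:ℝ) < m := by exact_mod_cast hm
    have hmod := Nat.div_add_mod (m+1) 3
    have hr : (m+1) % 3 ≤ 2 := Nat.le_of_lt_succ (Nat.mod_lt _ (by norm_num))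
    have hcast : 3 * (((m+1)/3 : ℕ) : ℝ) + (((m+1) % 3 : ℕ) : ℝ) = (m:ℝ) + 1 := by
      exact_mod_cast hmod
    have hrR : (((m+1) % 3 : ℕ) : ℝ) ≤ 2 := by exact_mod_cast hr
    rw [le_div_iff₀ hm0]
    have : (1/3 - 1/(m:ℝ)) * m = (m:ℝ)/3 - 1 := by field_simp
    rw [this]; linarith
  · filter_upwards [eventually_ge_atTop 1] with m hm
    have hm0 : (0:ℝ) < m := by exact_mod_cast hm
    have hmod := Nat.div_add_mod (m+1) 3
    have hcast : 3 * (((m+1)/3 : ℕ) : ℝ) + (((m+1) % 3 : ℕ) : ℝ) = (m:ℝ) + 1 := by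
      exact_mod_cast hmod
    have hr0 : (0:ℝ) ≤ (((m+1) % 3 : ℕ) : ℝ) := by positivity
    rw [div_le_iff₀ hm0]
    have : (1/3 + 1/(m:ℝ)) * m = (m:ℝ)/3 + 1 := by field_simp
    rw [this]; linarith

private lemma h_ee : Tendsto (fun m : ℕ => FF (ee m ((m+1)/3)) - FF (ee m 0)) atTop
    (nhds (FF (π/3) - FF 0)) := by
  have h1m : Tendsto (fun n : ℕ => 1 / (n : ℝ)) atTop (nhds 0) := tendsto_one_div_atTop_nhds_zero_nat
  have hin : Tendsto (fun m : ℕ => ee m ((m+1)/3)) atTop (nhds (π/3)) := by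
    have : Tendsto (fun m : ℕ => π * ((((m+1)/3 : ℕ) : ℝ)/m) + (π/2) * (1/m)) atTop
        (nhds (π * (1/3) + (π/2) * 0)) :=
      (tendsto_const_nhds.mul hNdiv).add (tendsto_const_nhds.mul h1m)
    rw [show π * (1/3) + (π/2) * 0 = π/3 by ring] at this
    apply this.congr'
    filter_upwards [eventually_ge_atTop 1] with m hm
    have hm0 : ((m:ℝ)) ≠ 0 := by positivity
    simp only [ee]; push_cast; field_simp; try ring
  have hin0 : Tendsto (fun m : ℕ => ee m 0) atTop (nhds 0) := by
    have : Tendsto (fun m : ℕ => (π/2) * (1/m)) atTop (nhds ((π/2) * 0)) :=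
      tendsto_const_nhds.mul h1m
    rw [mul_zero] at this
    apply this.congr'
    filter_upwards [eventually_ge_atTop 1] with m hm
    have hm0 : ((m:ℝ)) ≠ 0 := by positivity
    simp only [ee]; push_cast; field_simp; try ring
  exact ((FF_cont.tendsto _).comp hin).sub ((FF_cont.tendsto _).comp hin0)

private lemma h_xx : Tendsto (fun m : ℕ => FF (xx m ((m+1)/3)) - FF (xx m 0)) atTop
    (nhds (FF (π/3) - FF 0)) := by
  have h1m : Tendsto (fun n : ℕ => 1 / (n : ℝ)) atTop (nhds 0) := tendsto_one_div_atTop_nhds_zero_nat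
  have hin : Tendsto (fun m : ℕ => xx m ((m+1)/3)) atTop (nhds (π/3)) := by
    have : Tendsto (fun m : ℕ => π * ((((m+1)/3 : ℕ) : ℝ)/m) - (π/2) * (1/m)) atTop
        (nhds (π * (1/3) - (π/2) * 0)) :=
      (tendsto_const_nhds.mul hNdiv).sub (tendsto_const_nhds.mul h1m)
    rw [show π * (1/3) - (π/2) * 0 = π/3 by ring] at this
    apply this.congr'
    filter_upwards [eventually_ge_atTop 1] with m hm
    have hm0 : ((m:ℝ)) ≠ 0 := by positivity
    simp only [xx]; push_cast; field_simp; try ring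
  have hin0 : Tendsto (fun m : ℕ => xx m 0) atTop (nhds 0) := by
    have : Tendsto (fun m : ℕ => -((π/2) * (1/m))) atTop (nhds (-((π/2) * 0))) :=
      (tendsto_const_nhds.mul h1m).neg
    rw [mul_zero, neg_zero] at this
    apply this.congr'
    filter_upwards [eventually_ge_atTop 1] with m hm
    have hm0 : ((m:ℝ)) ≠ 0 := by positivity
    simp only [xx]; push_cast; field_simp; try ring
  exact ((FF_cont.tendsto _).comp hin).sub ((FF_cont.tendsto _).comp hin0)

/-- The dimer entropy `h(m) = (1/m) ∑_{j=1}^{⌊(m+1)/3⌋} log(2 cos(π(2j-1)/(2m)))`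
of the family of `m`-barrel fullerenes converges, as `m → ∞`, to
`-(3/(2π)) ∫_0^{π/3} log(2 sin t) dt`, the entropy of the hexagonal-lattice dimer model. -/
theorem entropy_limit :
    Tendsto (fun m : ℕ =>
        (1 / (m : ℝ)) * ∑ j ∈ Finset.Icc 1 ((m + 1) / 3),
          Real.log (2 * Real.cos (Real.pi * (2 * (j : ℝ) - 1) / (2 * m))))
      atTop
      (nhds (-(3 / (2 * Real.pi)) * ∫ t in (0 : ℝ)..(Real.pi / 3), Real.log (2 * Real.sin t))) := by
  set S := fun m : ℕ =>
        (1 / (m : ℝ)) * ∑ j ∈ Finset.Icc 1 ((m + 1) / 3),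
          Real.log (2 * Real.cos (Real.pi * (2 * (j : ℝ) - 1) / (2 * m))) with hS
  have hkey : ∀ᶠ m : ℕ in atTop, π * S m = ∑ j ∈ Icc 1 ((m+1)/3), (π / m) * gg (xx m j) := by
    filter_upwards [eventually_ge_atTop 1] with m hm
    rw [hS]
    rw [← mul_assoc, mul_one_div, Finset.mul_sum]
    refine Finset.sum_congr rfl fun j hj => ?_
    rw [Finset.mem_Icc] at hj
    have h3j : 3 * j ≤ m + 1 := by
      have h := Nat.mul_div_le (m+1) 3
      omega
    rw [gg_eq hm hj.1 h3j]
    rfl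
  have hπS : Tendsto (fun m => π * S m) atTop (nhds (FF (π/3) - FF 0)) := by
    apply tendsto_of_tendsto_of_tendsto_of_le_of_le' h_ee h_xx
    · filter_upwards [hkey, eventually_ge_atTop 1] with m hk hm
      rw [hk]; exact (sandwich m hm _).1
    · filter_upwards [hkey, eventually_ge_atTop 1] with m hk hm
      rw [hk]; exact (sandwich m hm _).2
  have hfin : Tendsto S atTop (nhds (π⁻¹ * (FF (π/3) - FF 0))) := by
    have := hπS.const_mul π⁻¹
    apply this.congr
    intro m
    rw [inv_mul_cancel_left₀ Real.pi_ne_zero]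
  have hval : π⁻¹ * (FF (π/3) - FF 0)
      = -(3/(2*π)) * ∫ t in (0:ℝ)..(π/3), Real.log (2 * Real.sin t) := by
    rw [FF_pi3, B_eq, ← mul_assoc]
    congr 1
    rw [mul_neg, neg_inj, inv_mul_eq_div]
    exact div_div 3 2 π
  rw [← hval]
  exact hfin

end EntropyAux
end

section
/- For b ≠ c real and z an m-th root of unity, the vector v ∈ ℂ^m with v_l = z^l satisfies B v = ((c^m − b^m)/(cz − b)) v, where B is the m×m matrix with entries B_{l',l} = c^{l−l'} b^{m−1+l'−l} for l' ≤ l and B_{l',l} = b^{l'−l−1} c^{m+l−l'} for l' > l (indices 0 ≤ l, l' ≤ m−1). -/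
/-- For reals `b ≠ c` and `z` an `m`-th root of unity (with `cz ≠ b`), the vector
`v_l = z^l` is an eigenvector of the `p = 1` sector transfer matrix `B`, with
`B_{l',l} = c^(l-l') b^(m-1+l'-l)` for `l' ≤ l` and `B_{l',l} = b^(l'-l-1) c^(m+l-l')`
for `l' > l`, with eigenvalue `(c^m - b^m)/(cz - b)`. -/
theorem bethe_p1_eigenvector (m : ℕ) (hm : 0 < m) (b c : ℝ) (hbc : b ≠ c)
    (z : ℂ) (hz : z ^ m = 1) (hden : (c : ℂ) * z ≠ (b : ℂ))
    (B : Matrix (Fin m) (Fin m) ℂ)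
    (hB : ∀ l' l : Fin m,
      B l' l = if (l' : ℕ) ≤ (l : ℕ)
        then (c : ℂ) ^ ((l : ℕ) - (l' : ℕ)) * (b : ℂ) ^ (m - 1 + (l' : ℕ) - (l : ℕ))
        else (b : ℂ) ^ ((l' : ℕ) - (l : ℕ) - 1) * (c : ℂ) ^ (m + (l : ℕ) - (l' : ℕ))) :
    B.mulVec (fun l => z ^ (l : ℕ))
      = fun l : Fin m => ((c : ℂ) ^ m - (b : ℂ) ^ m) / ((c : ℂ) * z - b) * z ^ (l : ℕ) := by
  haveI : NeZero m := ⟨hm.ne'⟩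
  funext l'
  have hsub : (c : ℂ) * z - b ≠ 0 := sub_ne_zero.mpr hden
  have key : ∀ k : Fin m,
      B l' (l' + k) * z ^ (((l' + k : Fin m) : ℕ))
        = ((c : ℂ) * z) ^ (k : ℕ) * (b : ℂ) ^ (m - 1 - (k : ℕ)) * z ^ (l' : ℕ) := by
    intro k
    have hk : (k : ℕ) < m := k.isLt
    have hl : (l' : ℕ) < m := l'.isLt
    have hval : ((l' + k : Fin m) : ℕ) = ((l' : ℕ) + k) % m := Fin.val_add l' k
    rw [hB]
    by_cases h : (l' : ℕ) + (k : ℕ) < m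
    · have hv : ((l' + k : Fin m) : ℕ) = (l' : ℕ) + k := by
        rw [hval, Nat.mod_eq_of_lt h]
      rw [hv, if_pos (Nat.le_add_right _ _)]
      have e1 : (l' : ℕ) + k - l' = k := by omega
      have e2 : m - 1 + (l' : ℕ) - ((l' : ℕ) + k) = m - 1 - (k : ℕ) := by omega
      rw [e1, e2, pow_add, mul_pow]
      ring
    · have hv : ((l' + k : Fin m) : ℕ) = (l' : ℕ) + k - m := by
        rw [hval, Nat.mod_eq_sub_mod (by omega), Nat.mod_eq_of_lt (by omega)]
      rw [hv, if_neg (by omega)]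
      have e1 : (l' : ℕ) - ((l' : ℕ) + k - m) - 1 = m - 1 - (k : ℕ) := by omega
      have e2 : m + ((l' : ℕ) + k - m) - (l' : ℕ) = (k : ℕ) := by omega
      have hzz : z ^ ((l' : ℕ) + k - m) = z ^ (l' : ℕ) * z ^ (k : ℕ) := by
        have h1 : z ^ ((l' : ℕ) + (k : ℕ)) = z ^ ((l' : ℕ) + k - m) * z ^ m := by
          rw [← pow_add]; congr 1; omega
        rw [hz, mul_one] at h1
        rw [← h1, pow_add]
      rw [e1, e2, hzz, mul_pow]
      ring
  show ∑ l : Fin m, B l' l * z ^ (l : ℕ) = _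
  rw [← Equiv.sum_comp (Equiv.addLeft l') (fun l : Fin m => B l' l * z ^ (l : ℕ))]
  simp only [Equiv.coe_addLeft]
  rw [Finset.sum_congr rfl (fun k _ => key k), ← Finset.sum_mul,
    Fin.sum_univ_eq_sum_range (fun k => ((c : ℂ) * z) ^ k * (b : ℂ) ^ (m - 1 - k)) m]
  have hS : (∑ k ∈ Finset.range m, ((c : ℂ) * z) ^ k * (b : ℂ) ^ (m - 1 - k))
      = ((c : ℂ) ^ m - (b : ℂ) ^ m) / ((c : ℂ) * z - b) := by
    rw [eq_div_iff hsub, geom_sum₂_mul, mul_pow, hz, mul_one]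
  rw [hS]
end
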